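/- arXiv:math/0612215 — 2 statements merged into one kernel-verified Lean document; each statement's English description precedes it below -/
import Mathlib

section
/- Hadamard product of operators: if Σ A_n x^n is annihilated by θ^2 − xP(θ) − cx^2(θ+1)^2 and Σ B_n x^n is annihilated by θ^2 − xQ(θ), where P, Q are polynomials of degree ≤ 2 and c is a constant, then Σ A_n B_n x^n is annihilated by θ^4 − xP(θ)Q(θ) − cx^2 Q(θ)Q(θ+1). -/
open PowerSeries

/-- The operator of multiplication by `x` on formal power series, as a `ℚ`-linear
endomorphism. -/
noncomputable def Mx : Module.End ℚ (PowerSeries ℚ) :=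
  LinearMap.mulLeft ℚ (PowerSeries.X : PowerSeries ℚ)

/-- The Euler operator `θ = x·d/dx` on formal power series, as a `ℚ`-linear
endomorphism. -/
noncomputable def Th : Module.End ℚ (PowerSeries ℚ) :=
  Mx ∘ₗ (PowerSeries.derivative ℚ).toLinearMap

/-- The Hadamard product `Σ A_n x^n * Σ B_n x^n = Σ A_n B_n x^n`. -/
noncomputable def hadamard (f g : PowerSeries ℚ) : PowerSeries ℚ :=
  PowerSeries.mk fun n => (PowerSeries.coeff n f) * (PowerSeries.coeff n g)

/-!
Since `θ xⁿ = n xⁿ`, the two operator equations say exactly that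
`n² Aₙ = P(n-1) Aₙ₋₁ + c (n-1)² Aₙ₋₂` and `n² Bₙ = Q(n-1) Bₙ₋₁`. Multiplying the first by
`n² Bₙ = Q(n-1) Bₙ₋₁` and then using `(n-1)² Bₙ₋₁ = Q(n-2) Bₙ₋₂` in the `c`-term gives
`n⁴ AₙBₙ = P(n-1)Q(n-1) Aₙ₋₁Bₙ₋₁ + c Q(n-2)Q(n-1) Aₙ₋₂Bₙ₋₂`, which is the claimed equation for
the Hadamard product read coefficientwise.
-/

namespace PowerSeries

section Diagonal

variable {R : Type*} [CommSemiring R] {D : Module.End R R⟦X⟧} {g : ℕ → R}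

theorem coeff_pow_apply_of_coeff_apply (h : ∀ n f, coeff n (D f) = g n * coeff n f)
    (k n : ℕ) (f : R⟦X⟧) : coeff n ((D ^ k) f) = g n ^ k * coeff n f := by
  induction k with
  | zero => simp
  | succ k ih => rw [pow_succ', Module.End.mul_apply, h, ih, pow_succ', mul_assoc]

theorem coeff_aeval_apply_of_coeff_apply (h : ∀ n f, coeff n (D f) = g n * coeff n f)
    (p : Polynomial R) (n : ℕ) (f : R⟦X⟧) :
    coeff n (Polynomial.aeval D p f) = p.eval (g n) * coeff n f := by
  induction p using Polynomial.induction_on' with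
  | add p q hp hq => simp [hp, hq, add_mul]
  | monomial k a =>
    simp [Polynomial.aeval_monomial, Algebra.algebraMap_eq_smul_one,
      coeff_pow_apply_of_coeff_apply h, mul_assoc]

end Diagonal

end PowerSeries

theorem hadamard_recurrence {R : Type*} [CommRing R] {P Q : Polynomial R} {c : R} {a b : ℕ → R}
    (ha : ∀ m : ℕ, ((m : R) + 2) ^ 2 * a (m + 2) =
      P.eval ((m : R) + 1) * a (m + 1) + c * (((m : R) + 1) ^ 2 * a m))
    (hb : ∀ m : ℕ, ((m : R) + 1) ^ 2 * b (m + 1) = Q.eval (m : R) * b m) (m : ℕ) :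
    ((m : R) + 2) ^ 4 * (a (m + 2) * b (m + 2)) =
      P.eval ((m : R) + 1) * Q.eval ((m : R) + 1) * (a (m + 1) * b (m + 1)) +
        c * (Q.eval (m : R) * Q.eval ((m : R) + 1)) * (a m * b m) := by
  have hb' := hb (m + 1)
  push_cast [add_assoc, one_add_one_eq_two] at hb'
  linear_combination ((m : R) + 2) ^ 2 * b (m + 2) * ha m
    + (P.eval ((m : R) + 1) * a (m + 1) + c * ((m : R) + 1) ^ 2 * a m) * hb'
    + c * Q.eval ((m : R) + 1) * a m * hb m

@[simp]
theorem Mx_apply (f : ℚ⟦X⟧) : Mx f = X * f := rfl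

@[simp]
theorem Mx_pow_apply (k : ℕ) (f : ℚ⟦X⟧) : (Mx ^ k) f = X ^ k * f := by
  induction k with
  | zero => simp
  | succ k ih => rw [pow_succ', Module.End.mul_apply, ih, Mx_apply, pow_succ', mul_assoc]

theorem coeff_Th (n : ℕ) (f : ℚ⟦X⟧) : coeff n (Th f) = n * coeff n f := by
  cases n with
  | zero => simp [Th]
  | succ n => simp [Th, coeff_succ_X_mul, coeff_derivative, mul_comm]

@[simp]
theorem coeff_Th_add_one (n : ℕ) (f : ℚ⟦X⟧) : coeff n ((Th + 1) f) = (n + 1) * coeff n f := by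
  simp [coeff_Th, add_mul]

@[simp]
theorem coeff_Th_pow (k n : ℕ) (f : ℚ⟦X⟧) : coeff n ((Th ^ k) f) = (n : ℚ) ^ k * coeff n f :=
  coeff_pow_apply_of_coeff_apply coeff_Th k n f

@[simp]
theorem coeff_aeval_Th (p : Polynomial ℚ) (n : ℕ) (f : ℚ⟦X⟧) :
    coeff n (Polynomial.aeval Th p f) = p.eval (n : ℚ) * coeff n f :=
  coeff_aeval_apply_of_coeff_apply coeff_Th p n f

@[simp]
theorem coeff_Th_add_one_pow (k n : ℕ) (f : ℚ⟦X⟧) :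
    coeff n (((Th + 1) ^ k) f) = ((n : ℚ) + 1) ^ k * coeff n f :=
  coeff_pow_apply_of_coeff_apply coeff_Th_add_one k n f

@[simp]
theorem coeff_aeval_Th_add_one (p : Polynomial ℚ) (n : ℕ) (f : ℚ⟦X⟧) :
    coeff n (Polynomial.aeval (Th + 1) p f) = p.eval ((n : ℚ) + 1) * coeff n f :=
  coeff_aeval_apply_of_coeff_apply coeff_Th_add_one p n f

@[simp]
theorem coeff_hadamard (n : ℕ) (f g : ℚ⟦X⟧) : coeff n (hadamard f g) = coeff n f * coeff n g :=
  coeff_mk _ _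

theorem hadamard_annihilated_general (P Q : Polynomial ℚ)
    (c : ℚ) (A B : PowerSeries ℚ)
    (hA : ((Th ^ 2 - Mx * Polynomial.aeval Th P - c • (Mx ^ 2 * (Th + 1) ^ 2) :
      Module.End ℚ (PowerSeries ℚ))) A = 0)
    (hB : (Th ^ 2 - Mx * Polynomial.aeval Th Q) B = 0) :
    ((Th ^ 4 - Mx * (Polynomial.aeval Th P * Polynomial.aeval Th Q)
        - c • (Mx ^ 2 * (Polynomial.aeval Th Q * Polynomial.aeval (Th + 1) Q)) :
      Module.End ℚ (PowerSeries ℚ)))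
      (hadamard A B) = 0 := by
  have hA_rec (m : ℕ) : ((m : ℚ) + 2) ^ 2 * coeff (m + 2) A =
      P.eval ((m : ℚ) + 1) * coeff (m + 1) A + c * (((m : ℚ) + 1) ^ 2 * coeff m A) := by
    simpa [coeff_X_pow_mul', sub_sub, sub_eq_zero] using congrArg (coeff (m + 2)) hA
  -- `simp` would turn `coeff 0` into `constantCoeff`, out of reach of the `coeff_*` lemmas.
  have hA_one : coeff 1 A = P.eval 0 * coeff 0 A := by
    simpa [coeff_X_pow_mul', sub_eq_zero, -coeff_zero_eq_constantCoeff]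
      using congrArg (coeff 1) hA
  have hB_rec (m : ℕ) : ((m : ℚ) + 1) ^ 2 * coeff (m + 1) B = Q.eval (m : ℚ) * coeff m B := by
    simpa [sub_eq_zero] using congrArg (coeff (m + 1)) hB
  have hB_one : coeff 1 B = Q.eval 0 * coeff 0 B := by
    simpa [sub_eq_zero, -coeff_zero_eq_constantCoeff] using congrArg (coeff 1) hB
  ext n
  match n with
  | 0 => simp [coeff_X_pow_mul', coeff_zero_X_mul, -coeff_zero_eq_constantCoeff]
  | 1 => simp [coeff_X_pow_mul', hA_one, hB_one, mul_comm, mul_left_comm, -coeff_zero_eq_constantCoeff]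
  | m + 2 =>
    simpa [coeff_X_pow_mul', sub_sub, sub_eq_zero, mul_assoc]
      using hadamard_recurrence (a := (coeff · A)) (b := (coeff · B)) hA_rec hB_rec m

/-- If `Σ A_n x^n` is annihilated by `θ² − xP(θ) − cx²(θ+1)²` and `Σ B_n x^n`
is annihilated by `θ² − xQ(θ)`, with `deg P, deg Q ≤ 2`, then the Hadamard product
`Σ A_n B_n x^n` is annihilated by `θ⁴ − xP(θ)Q(θ) − cx²Q(θ)Q(θ+1)`. -/
theorem hadamard_annihilated (P Q : Polynomial ℚ) (hP : P.degree ≤ 2) (hQ : Q.degree ≤ 2)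
    (c : ℚ) (A B : PowerSeries ℚ)
    (hA : ((Th ^ 2 - Mx * Polynomial.aeval Th P - c • (Mx ^ 2 * (Th + 1) ^ 2) :
      Module.End ℚ (PowerSeries ℚ))) A = 0)
    (hB : (Th ^ 2 - Mx * Polynomial.aeval Th Q) B = 0) :
    ((Th ^ 4 - Mx * (Polynomial.aeval Th P * Polynomial.aeval Th Q)
        - c • (Mx ^ 2 * (Polynomial.aeval Th Q * Polynomial.aeval (Th + 1) Q)) :
      Module.End ℚ (PowerSeries ℚ)))
      (hadamard A B) = 0 :=
  hadamard_annihilated_general P Q c A B hA hB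
end

section
/- For the hypergeometric 5th-order operator with b_4 = (5/2)(4 − 5cx)/(x(1−cx)), b_3 = (25 − c(42 + a_2 + a_4 − a_2^2 − a_4^2)x)/(x^2(1−cx)), and b_2 = (3/2)(10 − c(26 + 3a_2 + 3a_4 − 3a_2^2 − 3a_4^2)x)/(x^3(1−cx)), the identity b_2 = (3/2)b_3' + (3/5)b_3 b_4 − b_4'' − (6/5)b_4 b_4' − (4/25)b_4^3 holds on any interval avoiding x = 0 and cx = 1. -/
private lemma hd4 (c x : ℝ) (hx : x ≠ 0) (hc : c*x ≠ 1) :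
    HasDerivAt (fun t : ℝ => (5/2) * (4 - 5*c*t) / (t * (1 - c*t)))
      ((-10 + 20*c*x - (25/2)*c^2*x^2) / (x*(1-c*x))^2) x := by
  have h1 : (1 : ℝ) - c*x ≠ 0 := by intro h; apply hc; linarith
  have hden : x*(1-c*x) ≠ 0 := mul_ne_zero hx h1
  have hnum : HasDerivAt (fun t : ℝ => (5/2) * (4 - 5*c*t)) ((5/2) * (-(5*c))) x := by
    have := (((hasDerivAt_id x).const_mul (5*c)).const_sub 4).const_mul (5/2)
    simpa using this
  have hd : HasDerivAt (fun t : ℝ => t * (1 - c*t)) (1*(1-c*x) + x*(-(c*1))) x :=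
    (hasDerivAt_id x).mul (((hasDerivAt_id x).const_mul c).const_sub 1)
  have := hnum.div hd hden
  refine this.congr_deriv ?_
  field_simp
  ring

private lemma hd3 (K c x : ℝ) (hx : x ≠ 0) (hc : c*x ≠ 1) :
    HasDerivAt (fun t : ℝ => (25 - K*t) / (t ^ 2 * (1 - c*t)))
      ((-50*x + (75*c + K)*x^2 - 2*K*c*x^3) / (x^2*(1-c*x))^2) x := by
  have h1 : (1 : ℝ) - c*x ≠ 0 := by intro h; apply hc; linarith
  have hden : x^2*(1-c*x) ≠ 0 := mul_ne_zero (pow_ne_zero 2 hx) h1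
  have hnum : HasDerivAt (fun t : ℝ => 25 - K*t) (-(K*1)) x :=
    ((hasDerivAt_id x).const_mul K).const_sub 25
  have hd := ((hasDerivAt_id x).pow 2).mul (((hasDerivAt_id x).const_mul c).const_sub 1)
  have := hnum.div hd hden
  refine this.congr_deriv ?_
  simp only [Pi.mul_apply, Pi.pow_apply, Pi.add_apply, Pi.sub_apply, id]
  field_simp
  ring

private lemma hg (c x : ℝ) (hx : x ≠ 0) (hc : c*x ≠ 1) :
    HasDerivAt (fun t : ℝ => (-10 + 20*c*t - (25/2)*c^2*t^2) / (t*(1-c*t))^2)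
      ((20 - 60*c*x + 60*c^2*x^2 - 25*c^3*x^3) / (x*(1-c*x))^3) x := by
  have h1 : (1 : ℝ) - c*x ≠ 0 := by intro h; apply hc; linarith
  have hd0 : x*(1-c*x) ≠ 0 := mul_ne_zero hx h1
  have hden : (x*(1-c*x))^2 ≠ 0 := pow_ne_zero 2 hd0
  have hnum := ((hasDerivAt_const x (-10:ℝ)).add ((hasDerivAt_id x).const_mul (20*c))).sub
      (((hasDerivAt_id x).pow 2).const_mul ((25/2)*c^2))
  have hin : HasDerivAt (fun t : ℝ => t * (1 - c*t)) (1*(1-c*x) + x*(-(c*1))) x :=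
    (hasDerivAt_id x).mul (((hasDerivAt_id x).const_mul c).const_sub 1)
  have hd := hin.pow 2
  have := hnum.div hd hden
  refine this.congr_deriv ?_
  simp only [Pi.mul_apply, Pi.pow_apply, Pi.add_apply, Pi.sub_apply, id]
  field_simp
  ring

/-- For `b₄ = (5/2)(4 − 5cx)/(x(1−cx))`,
`b₃ = (25 − c(42 + a₂ + a₄ − a₂² − a₄²)x)/(x²(1−cx))`, and
`b₂ = (3/2)(10 − c(26 + 3a₂ + 3a₄ − 3a₂² − 3a₄²)x)/(x³(1−cx))`, the Calabi–Yau
condition `b₂ = (3/2)b₃' + (3/5)b₃b₄ − b₄'' − (6/5)b₄b₄' − (4/25)b₄³` holds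
wherever `x ≠ 0` and `cx ≠ 1`. -/
theorem hypergeometric_CY_condition (a2 a4 c : ℝ) :
    ∀ x : ℝ, x ≠ 0 → c * x ≠ 1 →
      (fun t => (3/2) * (10 - c * (26 + 3*a2 + 3*a4 - 3*a2^2 - 3*a4^2) * t)
          / (t ^ 3 * (1 - c * t))) x
        = (3/2) * deriv (fun t => (25 - c * (42 + a2 + a4 - a2^2 - a4^2) * t)
              / (t ^ 2 * (1 - c * t))) x
          + (3/5) * ((25 - c * (42 + a2 + a4 - a2^2 - a4^2) * x)
              / (x ^ 2 * (1 - c * x)))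
            * ((5/2) * (4 - 5*c*x) / (x * (1 - c*x)))
          - deriv^[2] (fun t => (5/2) * (4 - 5*c*t) / (t * (1 - c*t))) x
          - (6/5) * ((5/2) * (4 - 5*c*x) / (x * (1 - c*x)))
            * deriv (fun t => (5/2) * (4 - 5*c*t) / (t * (1 - c*t))) x
          - (4/25) * ((5/2) * (4 - 5*c*x) / (x * (1 - c*x))) ^ 3 := by
  intro x hx hc
  have h1 : (1 : ℝ) - c*x ≠ 0 := by intro h; apply hc; linarith
  set K := c * (42 + a2 + a4 - a2^2 - a4^2) with hK
  have e3 : deriv (fun t => (25 - c * (42 + a2 + a4 - a2^2 - a4^2) * t)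
      / (t ^ 2 * (1 - c * t))) x
      = (-50*x + (75*c + K)*x^2 - 2*K*c*x^3) / (x^2*(1-c*x))^2 := by
    rw [← hK]
    exact (hd3 K c x hx hc).deriv
  have e4 : deriv (fun t => (5/2) * (4 - 5*c*t) / (t * (1 - c*t))) x
      = (-10 + 20*c*x - (25/2)*c^2*x^2) / (x*(1-c*x))^2 := (hd4 c x hx hc).deriv
  have hmem : {t : ℝ | t ≠ 0 ∧ c*t ≠ 1} ∈ nhds x := by
    refine IsOpen.mem_nhds ?_ ⟨hx, hc⟩
    have hset : {t : ℝ | t ≠ 0 ∧ c*t ≠ 1}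
        = {(0:ℝ)}ᶜ ∩ ((fun t => c*t) ⁻¹' {(1:ℝ)}ᶜ) := rfl
    rw [hset]
    exact isOpen_compl_singleton.inter
      (isOpen_compl_singleton.preimage (continuous_const.mul continuous_id))
  have heq : deriv (fun t : ℝ => (5/2) * (4 - 5*c*t) / (t * (1 - c*t)))
      =ᶠ[nhds x] fun t => (-10 + 20*c*t - (25/2)*c^2*t^2) / (t*(1-c*t))^2 := by
    filter_upwards [hmem] with t ht
    exact (hd4 c t ht.1 ht.2).deriv
  have e2 : deriv^[2] (fun t => (5/2) * (4 - 5*c*t) / (t * (1 - c*t))) x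
      = (20 - 60*c*x + 60*c^2*x^2 - 25*c^3*x^3) / (x*(1-c*x))^3 := by
    have h2 : deriv^[2] (fun t : ℝ => (5/2) * (4 - 5*c*t) / (t * (1 - c*t))) x
        = deriv (deriv (fun t : ℝ => (5/2) * (4 - 5*c*t) / (t * (1 - c*t)))) x := rfl
    rw [h2, heq.deriv_eq]
    exact (hg c x hx hc).deriv
  rw [e3, e4, e2]
  field_simp
  ring
end
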